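/- The centroid map is continuous on LC: if f_m → f in L¹ with f_m, f non-degenerate integrable log-concave, then g(f_m) → g(f) in ℝⁿ. -/

import Mathlib

open MeasureTheory Filter Pointwise Topology
noncomputable section
set_option maxHeartbeats 1000000

/-- `ℝⁿ` as a Euclidean space. -/
abbrev Euc (n : ℕ) := EuclideanSpace ℝ (Fin n)

namespace CentroidAux
variable {n : ℕ}

lemma img_eq (G : Set (Euc n)) (x : Euc n) (s t : ℝ) :
    (fun z => s • x + t • z) '' G = (fun w => s • x + w) '' (t • G) := by
  ext w
  constructor
  · rintro ⟨b, hb, rfl⟩; exact ⟨t • b, ⟨b, hb, rfl⟩, rfl⟩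
  · rintro ⟨u, ⟨b, hb, rfl⟩, rfl⟩; exact ⟨b, hb, rfl⟩

lemma piece_meas {G : Set (Euc n)} (hG : MeasurableSet G) (x : Euc n) (s t : ℝ) :
    MeasurableSet ((fun z => s • x + t • z) '' G) := by
  rw [img_eq, Set.image_add_left]
  exact (hG.const_smul₀ t).preimage (measurable_const_add _)

lemma piece_vol (G : Set (Euc n)) (x : Euc n) (s t : ℝ) (ht : 0 ≤ t) :
    volume ((fun z => s • x + t • z) '' G) = ENNReal.ofReal (t ^ n) * volume G := by
  rw [img_eq, Set.image_add_left, measure_preimage_add,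
    Measure.addHaar_smul_of_nonneg volume ht, finrank_euclideanSpace_fin]

lemma piece_lb {g : Euc n → ℝ}
    (hlc : ∀ x y : Euc n, ∀ a b : ℝ, 0 ≤ a → 0 ≤ b → a + b = 1 →
      g x ^ a * g y ^ b ≤ g (a • x + b • y))
    {G : Set (Euc n)} {α : ℝ} (hα : 0 ≤ α) (hGg : ∀ z ∈ G, α ≤ g z)
    {x : Euc n} {γ : ℝ} (hγ0 : 0 ≤ γ) (hγ : γ ≤ g x)
    {s t : ℝ} (hs : 0 ≤ s) (ht : 0 ≤ t) (hst : s + t = 1) :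
    ∀ z ∈ (fun z => s • x + t • z) '' G, γ ^ s * α ^ t ≤ g z := by
  rintro z ⟨b, hb, rfl⟩
  calc γ ^ s * α ^ t ≤ g x ^ s * g b ^ t := by
        apply mul_le_mul (Real.rpow_le_rpow hγ0 hγ hs)
          (Real.rpow_le_rpow hα (hGg b hb) ht) (Real.rpow_nonneg hα t)
          (Real.rpow_nonneg (le_trans hγ0 hγ) s)
    _ ≤ g (s • x + t • b) := hlc x b s t hs ht hst

lemma piece_int {g : Euc n → ℝ}
    (hlc : ∀ x y : Euc n, ∀ a b : ℝ, 0 ≤ a → 0 ≤ b → a + b = 1 →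
      g x ^ a * g y ^ b ≤ g (a • x + b • y))
    (hgint : Integrable g)
    {G : Set (Euc n)} (hGm : MeasurableSet G) (hGfin : volume G ≠ ⊤)
    {α : ℝ} (hα : 0 ≤ α) (hGg : ∀ z ∈ G, α ≤ g z)
    {x : Euc n} {γ : ℝ} (hγ0 : 0 ≤ γ) (hγ : γ ≤ g x)
    {s t : ℝ} (hs : 0 ≤ s) (ht : 0 < t) (hst : s + t = 1) :
    γ ^ s * α ^ t * (t ^ n * (volume G).toReal)
      ≤ ∫ z in (fun z => s • x + t • z) '' G, g z := by
  have hvol := piece_vol G x s t ht.le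
  have hfin : volume ((fun z => s • x + t • z) '' G) ≠ ⊤ := by
    rw [hvol]; exact ENNReal.mul_ne_top ENNReal.ofReal_ne_top hGfin
  have h := setIntegral_ge_of_const_le_real (piece_meas hGm x s t) hfin
    (piece_lb hlc hα hGg hγ0 hγ hs ht.le hst) hgint.integrableOn
  calc γ ^ s * α ^ t * (t ^ n * (volume G).toReal)
      = γ ^ s * α ^ t * (volume ((fun z => s • x + t • z) '' G)).toReal := by
        rw [hvol, ENNReal.toReal_mul, ENNReal.toReal_ofReal (by positivity)]
    _ ≤ _ := h

lemma piece_loc {G : Set (Euc n)} {c : Euc n} {r : ℝ}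
    (hGb : G ⊆ Metric.closedBall c r)
    {x : Euc n} {s t : ℝ} (ht0 : 0 ≤ t) (ht1 : t ≤ 1) (hst : s + t = 1) :
    ∀ z ∈ (fun z => s • x + t • z) '' G, ‖z - c - s • (x - c)‖ ≤ r := by
  rintro z ⟨b, hb, rfl⟩
  have hb' : ‖b - c‖ ≤ r := by
    have := hGb hb
    rwa [Metric.mem_closedBall, dist_eq_norm] at this
  have heq : s • x + t • b - c - s • (x - c) = t • (b - c) := by
    have hs : s = 1 - t := by linarith
    rw [hs]; module
  rw [heq, norm_smul, Real.norm_eq_abs, abs_of_nonneg ht0]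
  calc t * ‖b - c‖ ≤ 1 * r := by
        apply mul_le_mul ht1 hb' (norm_nonneg _) zero_le_one
    _ = r := one_mul r

/-- The bound on the diameter of superlevel sets. -/
def mD (n : ℕ) (J r α v : ℝ) : ℝ := 6 * r * ((2:ℝ) ^ (n+1) * J / (α * v) + 2)

/-- The counting lemma: points where `g ≥ α/2` are within distance `mD` of `c`. -/
lemma counting {g : Euc n → ℝ} (hg0 : ∀ x, 0 ≤ g x)
    (hlc : ∀ x y : Euc n, ∀ a b : ℝ, 0 ≤ a → 0 ≤ b → a + b = 1 →
      g x ^ a * g y ^ b ≤ g (a • x + b • y))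
    (hgint : Integrable g)
    {J c r α G v} (hr : (0:ℝ) < r) (hα : (0:ℝ) < α) (hJ : ∫ z, g z ≤ J)
    (hGm : MeasurableSet G) (hGb : G ⊆ Metric.closedBall c r)
    (hGg : ∀ z ∈ G, α ≤ g z) (hv : (0:ℝ) < v) (hGv : v ≤ (volume G).toReal)
    {x : Euc n} (hx : α / 2 ≤ g x) : ‖x - c‖ ≤ mD n J r α v := by
  by_contra hD
  push_neg at hD
  have hGfin : volume G ≠ ⊤ :=
    (lt_of_le_of_lt (measure_mono hGb) measure_closedBall_lt_top).ne
  have hJ0 : 0 ≤ J := le_trans (integral_nonneg hg0) hJ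
  set X : ℝ := (2:ℝ) ^ (n+1) * J / (α * v) with hXdef
  have hX0 : 0 ≤ X := by positivity
  set K : ℕ := Nat.ceil X + 1 with hKdef
  have hK1 : X + 1 ≤ (K:ℝ) := by
    have := Nat.le_ceil X
    push_cast [hKdef]; linarith
  have hK2 : (K:ℝ) ≤ X + 2 := by
    have := (Nat.ceil_lt_add_one hX0)
    push_cast [hKdef]; linarith
  have hmD0 : (0:ℝ) ≤ mD n J r α v := by unfold mD; positivity
  have hD0 : 0 < ‖x - c‖ := lt_of_le_of_lt hmD0 hD
  set D := ‖x - c‖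
  -- the parameters
  set s : ℕ → ℝ := fun k => 3 * r * k / D with hsdef
  have hs0 : ∀ k, 0 ≤ s k := fun k => by positivity
  have hs_half : ∀ k < K, s k < 1/2 := by
    intro k hk
    have hk' : (k:ℝ) ≤ X + 1 := by
      have : (k:ℝ) ≤ (K:ℝ) - 1 := by
        have : (k:ℝ) + 1 ≤ (K:ℝ) := by exact_mod_cast Nat.succ_le_of_lt hk
        linarith
      linarith
    have hD' : 6 * r * (X + 2) < D := by
      simpa [mD, hXdef] using hD
    have h1 : 3 * r * (k:ℝ) ≤ 3 * r * (X + 1) := by nlinarith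
    have h2 : 3 * r * (X+1) < D / 2 := by nlinarith
    calc s k = 3 * r * k / D := rfl
      _ < 1/2 := by rw [div_lt_iff₀ hD0]; nlinarith
  -- the sets
  set S : ℕ → Set (Euc n) := fun k => (fun z => s k • x + (1 - s k) • z) '' G with hSdef
  have hdisj : ∀ k ∈ Finset.range K, ∀ j ∈ Finset.range K, k ≠ j →
      Disjoint (S k) (S j) := by
    intro k hk j hj hkj
    rw [Set.disjoint_left]
    intro z hzk hzj
    have h1 := piece_loc hGb (by linarith [hs_half k (Finset.mem_range.1 hk)])
      (by linarith [hs0 k]) (by ring) z hzk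
    have h2 := piece_loc hGb (by linarith [hs_half j (Finset.mem_range.1 hj)])
      (by linarith [hs0 j]) (by ring) z hzj
    have h3 : ‖s k • (x - c) - s j • (x - c)‖ ≤ 2 * r := by
      have : s k • (x - c) - s j • (x - c) =
          (z - c - s j • (x - c)) - (z - c - s k • (x - c)) := by module
      rw [this]
      calc ‖_ - _‖ ≤ ‖z - c - s j • (x - c)‖ + ‖z - c - s k • (x - c)‖ := norm_sub_le _ _
        _ ≤ 2 * r := by linarith
    have h4 : ‖s k • (x-c) - s j • (x-c)‖ = |s k - s j| * D := by
      rw [← sub_smul, norm_smul, Real.norm_eq_abs]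
    have h5 : 3 * r ≤ |s k - s j| * D := by
      have : s k - s j = 3 * r * ((k:ℝ) - j) / D := by
        rw [hsdef]; ring
      rw [this, abs_div, abs_of_nonneg hD0.le, div_mul_cancel₀ _ hD0.ne']
      have : (1:ℝ) ≤ |(k:ℝ) - (j:ℝ)| := by
        have : (k:ℝ) - (j:ℝ) ≠ 0 := by
          intro h; apply hkj; exact_mod_cast sub_eq_zero.1 h
        have := Int.one_le_abs (by exact_mod_cast fun h => this (by exact_mod_cast h) :
          ((k:ℤ) - (j:ℤ)) ≠ 0)
        calc (1:ℝ) ≤ |((k:ℤ) - (j:ℤ))| := by exact_mod_cast this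
          _ = |(k:ℝ) - (j:ℝ)| := by push_cast; ring_nf
      rw [abs_mul, abs_of_nonneg (by positivity : (0:ℝ) ≤ 3*r)]
      nlinarith [abs_nonneg ((k:ℝ) - j)]
    rw [h4] at h3; linarith
  -- per-piece lower bound
  have hpiece : ∀ k ∈ Finset.range K, α/2 * ((1/2)^n * v) ≤ ∫ z in S k, g z := by
    intro k hk
    have hk' := hs_half k (Finset.mem_range.1 hk)
    have h := piece_int hlc hgint hGm hGfin hα.le hGg (by positivity : (0:ℝ) ≤ α/2) hx
      (hs0 k) (by linarith : (0:ℝ) < 1 - s k) (by ring)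
    refine le_trans ?_ h
    have hbase : α/2 ≤ (α/2) ^ (s k) * α ^ (1 - s k) := by
      have e1 : (α/2) ^ (s k) * α ^ (1 - s k) = α / 2 ^ (s k) := by
        rw [Real.div_rpow hα.le (by norm_num : (0:ℝ) ≤ 2),
          div_mul_eq_mul_div, ← Real.rpow_add hα]
        norm_num
      rw [e1]
      calc α/2 = α/(2:ℝ)^(1:ℝ) := by norm_num
        _ ≤ α / 2 ^ (s k) := by
            apply div_le_div_of_nonneg_left hα.le (Real.rpow_pos_of_pos two_pos _)
            exact Real.rpow_le_rpow_of_exponent_le one_le_two (by linarith)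
    calc α/2 * ((1/2)^n * v) ≤ ((α/2) ^ (s k) * α ^ (1 - s k)) * ((1 - s k)^n * (volume G).toReal) := by
          apply mul_le_mul hbase ?_ (by positivity) ?_
          · apply mul_le_mul ?_ hGv hv.le (pow_nonneg (by linarith) n)
            exact pow_le_pow_left₀ (by norm_num) (by linarith) n
          · exact le_trans (by positivity) hbase
      _ ≤ _ := le_rfl
  -- summation
  have hce : α/2 * ((1/2)^n * v) = α * v / 2^(n+1) := by
    rw [one_div_pow, pow_succ]; field_simp
  have hsum : (K:ℝ) * (α/2 * ((1/2)^n * v)) ≤ J := by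
    calc (K:ℝ) * (α/2 * ((1/2)^n * v)) = ∑ _k ∈ Finset.range K, α/2 * ((1/2)^n * v) := by
          rw [Finset.sum_const, Finset.card_range, nsmul_eq_mul]
      _ ≤ ∑ k ∈ Finset.range K, ∫ z in S k, g z := Finset.sum_le_sum hpiece
      _ = ∫ z in ⋃ k ∈ Finset.range K, S k, g z := by
          rw [integral_biUnion_finset (Finset.range K)
            (fun k _ => piece_meas hGm x (s k) (1 - s k))
            (fun k hk j hj hkj => hdisj k hk j hj hkj)
            (fun k _ => hgint.integrableOn)]
      _ ≤ ∫ z, g z := setIntegral_le_integral hgint (Eventually.of_forall hg0)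
      _ ≤ J := hJ
  have hXe : X * (α * v) = 2 ^ (n+1) * J := by
    rw [hXdef]; field_simp
  have hP : (0:ℝ) < 2 ^ (n+1) := by positivity
  have hαv : (0:ℝ) < α * v := mul_pos hα hv
  rw [hce] at hsum
  have h7 : (K:ℝ) * (α * v) ≤ 2^(n+1) * J := by
    rw [div_eq_mul_inv] at hsum
    calc (K:ℝ) * (α*v) = ((K:ℝ) * (α * v * (2^(n+1))⁻¹)) * 2^(n+1) := by
          field_simp
      _ ≤ J * 2^(n+1) := by
          apply mul_le_mul_of_nonneg_right _ hP.le
          exact hsum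
      _ = 2^(n+1) * J := mul_comm _ _
  nlinarith [hK1, h7, hXe, hαv]



lemma supbound {g : Euc n → ℝ} (hg0 : ∀ x, 0 ≤ g x)
    (hlc : ∀ x y : Euc n, ∀ a b : ℝ, 0 ≤ a → 0 ≤ b → a + b = 1 →
      g x ^ a * g y ^ b ≤ g (a • x + b • y))
    (hgint : Integrable g)
    {J : ℝ} {c : Euc n} {r α : ℝ} {G : Set (Euc n)} {v : ℝ}
    (hα : (0:ℝ) < α) (hJ : ∫ z, g z ≤ J)
    (hGm : MeasurableSet G) (hGb : G ⊆ Metric.closedBall c r)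
    (hGg : ∀ z ∈ G, α ≤ g z) (hv : (0:ℝ) < v) (hGv : v ≤ (volume G).toReal)
    (x : Euc n) : g x ≤ ((2:ℝ)^n * J / v)^2 / α := by
  have hGfin : volume G ≠ ⊤ :=
    (lt_of_le_of_lt (measure_mono hGb) measure_closedBall_lt_top).ne
  have hJ0 : 0 ≤ J := le_trans (integral_nonneg hg0) hJ
  rcases le_or_gt (g x) 0 with h | h
  · exact le_trans h (by positivity)
  have hp := piece_int hlc hgint hGm hGfin hα.le hGg h.le (le_refl (g x))
    (by norm_num : (0:ℝ) ≤ 1/2) (by norm_num : (0:ℝ) < 1/2) (by norm_num)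
  have h2 : g x ^ ((1:ℝ)/2) * α ^ ((1:ℝ)/2) * ((1/2:ℝ)^n * v) ≤ J := by
    refine le_trans ?_ (le_trans (le_trans hp
      (setIntegral_le_integral hgint (Eventually.of_forall hg0))) hJ)
    apply mul_le_mul_of_nonneg_left ?_
      (mul_nonneg (Real.rpow_nonneg h.le _) (Real.rpow_nonneg hα.le _))
    exact mul_le_mul_of_nonneg_left hGv (by positivity)
  set B := α ^ ((1:ℝ)/2) * ((1/2:ℝ)^n * v) with hB
  have hαh : 0 < α ^ ((1:ℝ)/2) := Real.rpow_pos_of_pos hα _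
  have hB0 : 0 < B := by rw [hB]; positivity
  have h3 : g x ^ ((1:ℝ)/2) ≤ J / B := by
    rw [le_div_iff₀ hB0]
    calc g x ^ ((1:ℝ)/2) * B
        = g x ^ ((1:ℝ)/2) * α ^ ((1:ℝ)/2) * ((1/2:ℝ)^n * v) := by rw [hB]; ring
      _ ≤ J := h2
  have h4 : g x = (g x ^ ((1:ℝ)/2))^2 := by
    rw [← Real.rpow_natCast (g x ^ ((1:ℝ)/2)) 2, ← Real.rpow_mul h.le]
    norm_num
  have h5 : (g x ^ ((1:ℝ)/2))^2 ≤ (J/B)^2 :=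
    pow_le_pow_left₀ (Real.rpow_nonneg h.le _) h3 2
  have hα2 : (α ^ ((1:ℝ)/2))^2 = α := by
    rw [← Real.rpow_natCast (α ^ ((1:ℝ)/2)) 2, ← Real.rpow_mul hα.le]; norm_num
  have h6 : (J/B)^2 = ((2:ℝ)^n * J / v)^2 / α := by
    rw [hB, div_pow, mul_pow, hα2]
    rw [div_eq_div_iff (by positivity) (by positivity)]
    field_simp
    have h2n : (2:ℝ)^n * (1/2)^n = 1 := by rw [← mul_pow]; norm_num
    linear_combination (-(J^2) * (1 + (2:ℝ)^n * (1/2)^n)) * h2n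
  rw [h4, ← h6]; exact h5

/-- length scale for the exponential decay -/
def mL (n : ℕ) (J r α v : ℝ) : ℝ := mD n J r α v + r + 1
/-- exponential decay rate -/
def mc (n : ℕ) (J r α v : ℝ) : ℝ := Real.log 2 / mL n J r α v
/-- the sup bound -/
def mM (n : ℕ) (J α v : ℝ) : ℝ := ((2:ℝ)^n * J / v)^2 / α
/-- the constant in the exponential bound -/
def mCC (n : ℕ) (J r α v d : ℝ) : ℝ :=
  max α (mM n J α v) * Real.exp (mc n J r α v * (mL n J r α v + d + r))

lemma master {g : Euc n → ℝ} (hg0 : ∀ x, 0 ≤ g x)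
    (hlc : ∀ x y : Euc n, ∀ a b : ℝ, 0 ≤ a → 0 ≤ b → a + b = 1 →
      g x ^ a * g y ^ b ≤ g (a • x + b • y))
    (hgint : Integrable g)
    {J : ℝ} {c : Euc n} {r α : ℝ} {G : Set (Euc n)} {v : ℝ}
    (hr : (0:ℝ) < r) (hα : (0:ℝ) < α) (hJ : ∫ z, g z ≤ J)
    (hGm : MeasurableSet G) (hGb : G ⊆ Metric.closedBall c r)
    (hGg : ∀ z ∈ G, α ≤ g z) (hv : (0:ℝ) < v) (hGv : v ≤ (volume G).toReal) :
    ∀ x, g x ≤ mCC n J r α v ‖c‖ * Real.exp (-(mc n J r α v) * ‖x‖) := by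
  intro x
  have hJ0 : 0 ≤ J := le_trans (integral_nonneg hg0) hJ
  set D₀ := mD n J r α v with hD₀
  set L := mL n J r α v with hLdef
  set κ := mc n J r α v with hκdef
  set M := mM n J α v with hMdef
  set C := mCC n J r α v ‖c‖ with hCdef
  have hmD0 : (0:ℝ) ≤ D₀ := by rw [hD₀]; unfold mD; positivity
  have hLe : L = D₀ + r + 1 := by rw [hLdef, hD₀]; rfl
  have hL0 : 0 < L := by rw [hLe]; linarith
  have hκe : κ = Real.log 2 / L := by rw [hκdef, hLdef]; rfl
  have hκ0 : 0 < κ := by rw [hκe]; exact div_pos (Real.log_pos one_lt_two) hL0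
  have hκL : κ * L = Real.log 2 := by rw [hκe]; field_simp
  have hM0 : 0 ≤ M := by rw [hMdef]; unfold mM; positivity
  have hmax : 0 < max α M := lt_of_lt_of_le hα (le_max_left _ _)
  have hCe : C = max α M * Real.exp (κ * (L + ‖c‖ + r)) := by
    rw [hCdef, hκdef, hLdef, hMdef]; rfl
  have hC0 : 0 < C := by rw [hCe]; positivity
  -- a point of G
  have hGne : G.Nonempty := by
    rcases G.eq_empty_or_nonempty with hGe | hGe
    · exfalso; rw [hGe] at hGv; simp at hGv; linarith
    · exact hGe
  obtain ⟨y, hy⟩ := hGne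
  have hyc : ‖y - c‖ ≤ r := by
    have := hGb hy; rwa [Metric.mem_closedBall, dist_eq_norm] at this
  have hgy : α ≤ g y := hGg y hy
  have hyn : ‖y‖ ≤ ‖c‖ + r := by
    calc ‖y‖ = ‖y - c + c‖ := by rw [sub_add_cancel]
      _ ≤ ‖y - c‖ + ‖c‖ := norm_add_le _ _
      _ ≤ ‖c‖ + r := by linarith
  have hsup : g x ≤ M := by
    rw [hMdef]; exact supbound hg0 hlc hgint hα hJ hGm hGb hGg hv hGv x
  rcases le_or_gt ‖x - y‖ L with hnear | hfar
  · -- near case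
    have hxn : ‖x‖ ≤ L + (‖c‖ + r) := by
      calc ‖x‖ = ‖x - y + y‖ := by rw [sub_add_cancel]
        _ ≤ ‖x - y‖ + ‖y‖ := norm_add_le _ _
        _ ≤ L + (‖c‖ + r) := by linarith
    calc g x ≤ M := hsup
      _ ≤ max α M := le_max_right _ _
      _ ≤ max α M * Real.exp (κ * (L + ‖c‖ + r) + -κ * ‖x‖) := by
          apply le_mul_of_one_le_right hmax.le
          apply Real.one_le_exp
          nlinarith [norm_nonneg x]
      _ = C * Real.exp (-κ * ‖x‖) := by rw [hCe, Real.exp_add, mul_assoc]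
  · -- far case
    have hDy0 : 0 < ‖x - y‖ := lt_trans hL0 hfar
    set Dy := ‖x - y‖ with hDydef
    set b := L / Dy with hb
    have hb0 : 0 < b := div_pos hL0 hDy0
    have hb1 : b ≤ 1 := by rw [hb, div_le_one hDy0]; linarith
    set p := (1 - b) • y + b • x with hp
    have hpy : ‖p - y‖ = L := by
      have hpe : p - y = b • (x - y) := by rw [hp]; module
      rw [hpe, norm_smul, Real.norm_eq_abs, abs_of_nonneg hb0.le, hb]
      field_simp
      rfl
    have hpc : D₀ < ‖p - c‖ := by
      have ht : L ≤ ‖p - c‖ + r := by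
        calc L = ‖p - y‖ := hpy.symm
          _ ≤ ‖p - c‖ + ‖c - y‖ := by
              have : p - y = (p - c) + (c - y) := by module
              rw [this]; exact norm_add_le _ _
          _ ≤ ‖p - c‖ + r := by
              have hcy : ‖c - y‖ ≤ r := by rw [norm_sub_rev]; exact hyc
              linarith
      linarith [hLe]
    have hgp : g p < α / 2 := by
      by_contra hcon; push_neg at hcon
      have := counting hg0 hlc hgint hr hα hJ hGm hGb hGg hv hGv hcon
      rw [← hD₀] at this; linarith
    have hkey : α ^ (1-b) * g x ^ b ≤ g p := by
      calc α ^ (1-b) * g x ^ b ≤ g y ^ (1-b) * g x ^ b := by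
            apply mul_le_mul_of_nonneg_right
              (Real.rpow_le_rpow hα.le hgy (by linarith)) (Real.rpow_nonneg (hg0 x) b)
        _ ≤ g p := by rw [hp]; exact hlc y x (1-b) b (by linarith) hb0.le (by ring)
    rcases le_or_gt (g x) 0 with hgx | hgx
    · exact le_trans hgx (by positivity)
    have hαb : 0 < α ^ (1-b) := Real.rpow_pos_of_pos hα _
    have h8 : g x ^ b < α ^ b / 2 := by
      have h8a : α ^ (1-b) * g x ^ b < α / 2 := lt_of_le_of_lt hkey hgp
      have hsplit : α ^ b = α / α ^ (1-b) := by
        rw [eq_div_iff hαb.ne', ← Real.rpow_add hα]; norm_num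
      calc g x ^ b = (α ^ (1-b) * g x ^ b) / α ^ (1-b) := by field_simp
        _ < (α/2) / α ^ (1-b) := by gcongr
        _ = α ^ b / 2 := by rw [hsplit]; ring
    have h9 : g x ≤ (α ^ b / 2) ^ ((1:ℝ)/b) := by
      calc g x = (g x ^ b) ^ ((1:ℝ)/b) := by
            rw [← Real.rpow_mul hgx.le, mul_one_div, div_self hb0.ne', Real.rpow_one]
        _ ≤ _ := Real.rpow_le_rpow (Real.rpow_nonneg hgx.le b) h8.le (by positivity)
    have h10 : (α ^ b / 2) ^ ((1:ℝ)/b) = α * Real.exp (-(κ * Dy)) := by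
      rw [Real.div_rpow (Real.rpow_nonneg hα.le b) (by norm_num : (0:ℝ) ≤ 2)]
      rw [← Real.rpow_mul hα.le, mul_one_div, div_self hb0.ne', Real.rpow_one]
      rw [Real.rpow_def_of_pos two_pos]
      have hlog : Real.log 2 * ((1:ℝ)/b) = κ * Dy := by
        rw [hb, hκe]; field_simp
      rw [hlog, div_eq_mul_inv, ← Real.exp_neg]
    have h11 : α * Real.exp (-(κ * Dy)) ≤ C * Real.exp (-κ * ‖x‖) := by
      have hxDy : ‖x‖ - (‖c‖ + r) ≤ Dy := by
        have : ‖x‖ ≤ Dy + ‖y‖ := by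
          calc ‖x‖ = ‖x - y + y‖ := by rw [sub_add_cancel]
            _ ≤ ‖x - y‖ + ‖y‖ := norm_add_le _ _
        linarith
      calc α * Real.exp (-(κ * Dy)) ≤ α * Real.exp (κ * (‖c‖ + r) + -κ * ‖x‖) := by
            apply mul_le_mul_of_nonneg_left ?_ hα.le
            apply Real.exp_le_exp.2
            nlinarith
        _ ≤ C * Real.exp (-κ * ‖x‖) := by
            rw [hCe, Real.exp_add, ← mul_assoc]
            apply mul_le_mul_of_nonneg_right ?_ (Real.exp_pos _).le
            apply mul_le_mul (le_max_left _ _) ?_ (Real.exp_pos _).le hmax.le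
            apply Real.exp_le_exp.2
            nlinarith
    calc g x ≤ (α ^ b / 2) ^ ((1:ℝ)/b) := h9
      _ = α * Real.exp (-(κ * Dy)) := h10
      _ ≤ C * Real.exp (-κ * ‖x‖) := h11

lemma integrable_decay {c₀ : ℝ} (hc : 0 < c₀) :
    Integrable (fun x : Euc n => Real.exp (-c₀ * ‖x‖) * ‖x‖) := by
  set k := n + 2 with hk
  set A : ℝ := (2:ℝ)^k * (Nat.factorial k) / c₀^k + 2^k with hA
  have hA0 : 0 < A := by rw [hA]; positivity
  have key : ∀ t : ℝ, 0 ≤ t → Real.exp (-c₀ * t) * t ≤ A * (1+t) ^ (-((n:ℝ)+1)) := by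
    intro t ht
    have h1t : (0:ℝ) < 1 + t := by linarith
    have hmain : t * (1+t)^(n+1) ≤ A * Real.exp (c₀ * t) := by
      have hexp1 : (1:ℝ) ≤ Real.exp (c₀ * t) := Real.one_le_exp (by positivity)
      rcases le_total t 1 with h1 | h1
      · calc t * (1+t)^(n+1) ≤ 1 * 2^(n+1) := by
              apply mul_le_mul h1 (pow_le_pow_left₀ (by linarith) (by linarith) _)
                (by positivity) zero_le_one
          _ ≤ 2^k := by
              rw [one_mul]
              exact pow_le_pow_right₀ one_le_two (by omega)
          _ ≤ A := by
              rw [hA]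
              have : (0:ℝ) ≤ (2:ℝ)^k * (Nat.factorial k) / c₀^k := by positivity
              linarith
          _ ≤ A * Real.exp (c₀ * t) := le_mul_of_one_le_right hA0.le hexp1
      · have h2 : (1+t)^(n+1) ≤ (2*t)^(n+1) :=
          pow_le_pow_left₀ (by linarith) (by linarith) _
        have h3 : c₀^k * t^k ≤ (Nat.factorial k) * Real.exp (c₀ * t) := by
          have h4 := Real.pow_div_factorial_le_exp (x := c₀ * t) (by positivity) k
          rw [div_le_iff₀ (by positivity : (0:ℝ) < (Nat.factorial k : ℝ))] at h4
          calc c₀^k * t^k = (c₀*t)^k := (mul_pow _ _ _).symm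
            _ ≤ Real.exp (c₀*t) * (Nat.factorial k) := h4
            _ = (Nat.factorial k) * Real.exp (c₀*t) := mul_comm _ _
        calc t * (1+t)^(n+1) ≤ t * (2*t)^(n+1) := by
              apply mul_le_mul_of_nonneg_left h2 ht
          _ = 2^(n+1) * t^k := by rw [mul_pow, hk]; ring
          _ ≤ 2^k * t^k := by
              apply mul_le_mul_of_nonneg_right
                (pow_le_pow_right₀ one_le_two (by omega)) (by positivity)
          _ ≤ 2^k * ((Nat.factorial k) * Real.exp (c₀*t) / c₀^k) := by
              apply mul_le_mul_of_nonneg_left ?_ (by positivity)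
              rw [le_div_iff₀ (by positivity)]
              linarith [h3]
          _ = (2:ℝ)^k * (Nat.factorial k) / c₀^k * Real.exp (c₀*t) := by ring
          _ ≤ A * Real.exp (c₀*t) := by
              apply mul_le_mul_of_nonneg_right ?_ (Real.exp_pos _).le
              rw [hA]
              have : (0:ℝ) ≤ (2:ℝ)^k := by positivity
              linarith
    have hpow : (1+t) ^ (-((n:ℝ)+1)) = ((1+t)^(n+1))⁻¹ := by
      rw [← Real.rpow_natCast (1+t) (n+1), ← Real.rpow_neg h1t.le]
      norm_num
    rw [hpow, neg_mul, Real.exp_neg]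
    have h5 : (Real.exp (c₀*t))⁻¹ * t = t / Real.exp (c₀*t) := by ring
    have h6 : A * ((1+t)^(n+1))⁻¹ = A / (1+t)^(n+1) := by ring
    rw [h5, h6, div_le_div_iff₀ (Real.exp_pos _) (by positivity)]
    exact hmain
  have hbase : Integrable (fun x : Euc n => A * (1 + ‖x‖) ^ (-((n:ℝ)+1))) := by
    apply Integrable.const_mul
    apply integrable_one_add_norm
    rw [finrank_euclideanSpace_fin]
    linarith
  apply hbase.mono'
  · exact ((Real.continuous_exp.comp (continuous_const.mul continuous_norm)).mul
      continuous_norm).aestronglyMeasurable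
  · filter_upwards with x
    rw [Real.norm_eq_abs, abs_of_nonneg (by positivity)]
    exact key ‖x‖ (norm_nonneg x)

lemma tail_tendsto {ψ : Euc n → ℝ} (hψ : Integrable ψ) :
    Tendsto (fun R : ℕ => ∫ x in (Metric.ball (0:Euc n) R)ᶜ, ψ x) atTop (𝓝 0) := by
  have hmono : Monotone (fun R : ℕ => Metric.ball (0:Euc n) R) := fun a b hab =>
    Metric.ball_subset_ball (by exact_mod_cast hab)
  have hunion : ⋃ R : ℕ, Metric.ball (0:Euc n) R = Set.univ := by
    ext x
    simp only [Set.mem_iUnion, Set.mem_univ, iff_true, Metric.mem_ball]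
    obtain ⟨R, hR⟩ := exists_nat_gt (dist x 0)
    exact ⟨R, hR⟩
  have h1 : Tendsto (fun R : ℕ => ∫ x in Metric.ball (0:Euc n) R, ψ x) atTop
      (𝓝 (∫ x, ψ x)) := by
    have h2 := tendsto_setIntegral_of_monotone (fun R : ℕ => measurableSet_ball) hmono
      (by rw [hunion]; exact hψ.integrableOn)
    rwa [hunion, setIntegral_univ] at h2
  have heq : ∀ R : ℕ, ∫ x in (Metric.ball (0:Euc n) R)ᶜ, ψ x
      = (∫ x, ψ x) - ∫ x in Metric.ball (0:Euc n) R, ψ x := by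
    intro R
    have h3 := integral_add_compl (measurableSet_ball (x := (0:Euc n)) (ε := (R:ℝ))) hψ
    linarith
  simp_rw [heq]
  have h4 := (tendsto_const_nhds :
    Tendsto (fun _ : ℕ => (∫ x, ψ x)) atTop (𝓝 (∫ x, ψ x))).sub h1
  simpa using h4

end CentroidAux

open CentroidAux

/-- `f` is a non-degenerate, upper semicontinuous, integrable log-concave
function on `ℝⁿ` (the class `LC`): `f ≥ 0`, `f` is upper semicontinuous,
log-concave, integrable with `0 < ∫ f`, and the interior of its support is
non-empty. -/
def IsLC {n : ℕ} (f : Euc n → ℝ) : Prop :=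
  (∀ x, 0 ≤ f x) ∧ UpperSemicontinuous f ∧
  (∀ x y : Euc n, ∀ a b : ℝ, 0 ≤ a → 0 ≤ b → a + b = 1 →
      f x ^ a * f y ^ b ≤ f (a • x + b • y)) ∧
  Integrable f ∧ 0 < ∫ x, f x ∧ (interior (Function.support f)).Nonempty

/-- The centroid `g(f) = (∫ x f(x) dx)/(∫ f dx)`. -/
def centroidF {n : ℕ} (f : Euc n → ℝ) : Euc n :=
  (∫ x, f x)⁻¹ • ∫ x, f x • x

/-- the centroid map is continuous on `LC` with respect to `L¹`
convergence. -/
theorem centroid_continuous (n : ℕ) (F : ℕ → Euc n → ℝ) (f : Euc n → ℝ)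
    (hF : ∀ m, IsLC (F m)) (hf : IsLC f)
    (hL1 : Tendsto (fun m => ∫ x, |F m x - f x|) atTop (nhds 0)) :
    Tendsto (fun m => centroidF (F m)) atTop (nhds (centroidF f)) := by
  obtain ⟨hf0, hfusc, hflc, hfint, hfpos, -⟩ := hf
  have hfm : Measurable f := hfusc.measurable
  have hF0 : ∀ m x, 0 ≤ F m x := fun m => (hF m).1
  have hFlc : ∀ m, ∀ x y : Euc n, ∀ a b : ℝ, 0 ≤ a → 0 ≤ b → a + b = 1 →
      F m x ^ a * F m y ^ b ≤ F m (a • x + b • y) := fun m => (hF m).2.2.1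
  have hFint : ∀ m, Integrable (F m) := fun m => (hF m).2.2.2.1
  have hFmeas : ∀ m, Measurable (F m) := fun m => ((hF m).2.1).measurable
  -- Step A: some superlevel set of `f` has positive measure
  obtain ⟨β, hβ0, hEβ⟩ : ∃ β : ℝ, 0 < β ∧ volume {x : Euc n | β ≤ f x} ≠ 0 := by
    by_contra hcon
    push_neg at hcon
    have hnull : volume {x : Euc n | f x ≠ 0} = 0 := by
      have hsub : {x : Euc n | f x ≠ 0} ⊆ ⋃ k : ℕ, {x : Euc n | ((k:ℝ)+1)⁻¹ ≤ f x} := by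
        intro x hx
        have hx0 : 0 < f x := lt_of_le_of_ne (hf0 x) (Ne.symm hx)
        obtain ⟨k, hk⟩ := exists_nat_gt (f x)⁻¹
        refine Set.mem_iUnion.2 ⟨k, ?_⟩
        simp only [Set.mem_setOf_eq]
        have h1 : (f x)⁻¹ ≤ ((k:ℝ)+1) := by linarith
        calc ((k:ℝ)+1)⁻¹ ≤ ((f x)⁻¹)⁻¹ := by
              apply inv_anti₀ (by positivity) h1
          _ = f x := inv_inv _
      exact measure_mono_null hsub
        (measure_iUnion_null fun k => hcon _ (by positivity))
    have hae : f =ᵐ[volume] (fun _ => (0:ℝ)) := by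
      rw [Filter.eventuallyEq_iff_exists_mem]
      exact ⟨{x | f x ≠ 0}ᶜ, by rwa [MeasureTheory.mem_ae_iff, compl_compl],
        fun x hx => by simpa using hx⟩
    rw [integral_congr_ae hae, integral_zero] at hfpos
    exact lt_irrefl 0 hfpos
  -- Step B: a bounded piece of positive measure
  obtain ⟨R₀, hR₀⟩ : ∃ R₀ : ℕ,
      volume ({x : Euc n | β ≤ f x} ∩ Metric.closedBall 0 ((R₀:ℝ)+1)) ≠ 0 := by
    by_contra hcon
    push_neg at hcon
    apply hEβ
    have hcov : {x : Euc n | β ≤ f x}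
        = ⋃ R : ℕ, ({x : Euc n | β ≤ f x} ∩ Metric.closedBall 0 ((R:ℝ)+1)) := by
      ext x
      simp only [Set.mem_iUnion, Set.mem_inter_iff, Set.mem_setOf_eq,
        Metric.mem_closedBall]
      constructor
      · intro hx
        obtain ⟨R, hR⟩ := exists_nat_gt (dist x 0)
        exact ⟨R, hx, by linarith⟩
      · rintro ⟨R, hR, -⟩; exact hR
    rw [hcov]
    exact measure_iUnion_null fun R => hcon R
  set r : ℝ := (R₀:ℝ) + 1 with hrdef
  have hr : (0:ℝ) < r := by positivity
  set G : Set (Euc n) := {x : Euc n | β ≤ f x} ∩ Metric.closedBall 0 r with hGdef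
  have hGm : MeasurableSet G :=
    (measurableSet_le measurable_const hfm).inter measurableSet_closedBall
  have hGb : G ⊆ Metric.closedBall (0:Euc n) r := Set.inter_subset_right
  have hGfin : volume G ≠ ⊤ :=
    (lt_of_le_of_lt (measure_mono hGb) measure_closedBall_lt_top).ne
  have hG0 : volume G ≠ 0 := hR₀
  set v : ℝ := (volume G).toReal / 2 with hvdef
  have hGtR : 0 < (volume G).toReal := ENNReal.toReal_pos hG0 hGfin
  have hv : 0 < v := by rw [hvdef]; linarith
  have hGv : v ≤ (volume G).toReal := by rw [hvdef]; linarith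
  set α : ℝ := β / 2 with hαdef
  have hα : 0 < α := by rw [hαdef]; linarith
  set J : ℝ := (∫ x, f x) + 1 with hJdef
  have hJf : ∫ x, f x ≤ J := by rw [hJdef]; linarith
  have hJ0 : 0 ≤ J := le_trans (integral_nonneg hf0) hJf
  have hGgf : ∀ z ∈ G, α ≤ f z := by
    intro z hz
    have h1 : β ≤ f z := hz.1
    rw [hαdef]; linarith
  set κ : ℝ := mc n J r α v with hκdef
  set C : ℝ := mCC n J r α v ‖(0:Euc n)‖ with hCdef
  have hκ0 : 0 < κ := by
    rw [hκdef]; unfold mc mL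
    apply div_pos (Real.log_pos one_lt_two)
    have : 0 ≤ mD n J r α v := by unfold mD; positivity
    linarith
  have hC0 : 0 < C := by
    rw [hCdef]; unfold mCC
    exact mul_pos (lt_of_lt_of_le hα (le_max_left _ _)) (Real.exp_pos _)
  have hboundf : ∀ x, f x ≤ C * Real.exp (-κ * ‖x‖) :=
    master hf0 hflc hfint hr hα hJf hGm hGb hGgf hv hGv
  -- the eventually-good index threshold
  have hev : ∀ᶠ m in atTop, (∫ x, |F m x - f x|) < min 1 (α * v) :=
    hL1.eventually_lt_const (by positivity)
  obtain ⟨N, hN⟩ := eventually_atTop.1 hev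
  -- uniform exponential bound for m ≥ N
  have hboundm : ∀ m, N ≤ m → ∀ x, F m x ≤ C * Real.exp (-κ * ‖x‖) := by
    intro m hm
    have ham := hN m hm
    have hsubint : Integrable (fun x => F m x - f x) := (hFint m).sub hfint
    have habs : Integrable (fun x => |F m x - f x|) := hsubint.abs
    have hJm : ∫ x, F m x ≤ J := by
      have h1 : (∫ x, F m x) - ∫ x, f x ≤ |∫ x, (F m x - f x)| := by
        rw [integral_sub (hFint m) hfint]; exact le_abs_self _
      have h2 : |∫ x, (F m x - f x)| ≤ ∫ x, |F m x - f x| := by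
        calc |∫ x, (F m x - f x)| = ‖∫ x, (F m x - f x)‖ := (Real.norm_eq_abs _).symm
          _ ≤ ∫ x, ‖F m x - f x‖ := norm_integral_le_integral_norm _
          _ = ∫ x, |F m x - f x| := by simp [Real.norm_eq_abs]
      have h3 : (∫ x, |F m x - f x|) ≤ 1 :=
        le_of_lt (lt_of_lt_of_le ham (min_le_left _ _))
      rw [hJdef]; linarith
    have hGmm : MeasurableSet (G ∩ {x : Euc n | α ≤ F m x}) :=
      hGm.inter (measurableSet_le measurable_const (hFmeas m))
    have hGmb : G ∩ {x : Euc n | α ≤ F m x} ⊆ Metric.closedBall (0:Euc n) r :=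
      fun z hz => hGb hz.1
    have hGmg : ∀ z ∈ G ∩ {x : Euc n | α ≤ F m x}, α ≤ F m z := fun z hz => hz.2
    have hGmv : v ≤ (volume (G ∩ {x : Euc n | α ≤ F m x})).toReal := by
      set S : Set (Euc n) := G ∩ {x : Euc n | α ≤ |F m x - f x|} with hSdef
      have hSm : MeasurableSet S :=
        hGm.inter (measurableSet_le measurable_const ((hFmeas m).sub hfm).abs)
      have hSfin : volume S ≠ ⊤ :=
        ne_top_of_le_ne_top hGfin (measure_mono Set.inter_subset_left)
      have hSb : α * (volume S).toReal ≤ ∫ x, |F m x - f x| := by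
        calc α * (volume S).toReal ≤ ∫ x in S, |F m x - f x| :=
              setIntegral_ge_of_const_le_real hSm hSfin (fun x hx => hx.2)
                habs.integrableOn
          _ ≤ ∫ x, |F m x - f x| :=
              setIntegral_le_integral habs (Eventually.of_forall fun x => abs_nonneg _)
      have hStoReal : (volume S).toReal < v := by
        have ham2 : (∫ x, |F m x - f x|) < α * v :=
          lt_of_lt_of_le ham (min_le_right _ _)
        nlinarith [ENNReal.toReal_nonneg (a := volume S)]
      have hcover : G ⊆ (G ∩ {x : Euc n | α ≤ F m x}) ∪ S := by
        intro z hz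
        rcases le_or_gt α (F m z) with hzc | hzc
        · exact Or.inl ⟨hz, hzc⟩
        · refine Or.inr ⟨hz, ?_⟩
          have hfz : β ≤ f z := hz.1
          simp only [Set.mem_setOf_eq]
          have h4 : α ≤ f z - F m z := by rw [hαdef] at hzc ⊢; linarith
          calc α ≤ f z - F m z := h4
            _ ≤ |F m z - f z| := by rw [abs_sub_comm]; exact le_abs_self _
      have hGmfin : volume (G ∩ {x : Euc n | α ≤ F m x}) ≠ ⊤ :=
        ne_top_of_le_ne_top hGfin (measure_mono Set.inter_subset_left)
      have hmeasineq : volume G ≤ volume (G ∩ {x : Euc n | α ≤ F m x}) + volume S :=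
        le_trans (measure_mono hcover) (measure_union_le _ _)
      have h5 : (volume G).toReal
          ≤ (volume (G ∩ {x : Euc n | α ≤ F m x})).toReal + (volume S).toReal := by
        calc (volume G).toReal
            ≤ ((volume (G ∩ {x : Euc n | α ≤ F m x})) + volume S).toReal :=
              ENNReal.toReal_mono (ENNReal.add_ne_top.2 ⟨hGmfin, hSfin⟩) hmeasineq
          _ = _ := ENNReal.toReal_add hGmfin hSfin
      rw [hvdef] at hStoReal ⊢
      linarith
    exact master (hF0 m) (hFlc m) (hFint m) hr hα hJm hGmm hGmb hGmg hv hGmv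
  -- integrability of the first moments
  have hψint : Integrable (fun x : Euc n => Real.exp (-κ * ‖x‖) * ‖x‖) :=
    integrable_decay hκ0
  have hvec : ∀ g : Euc n → ℝ, Measurable g → (∀ x, 0 ≤ g x) →
      (∀ x, g x ≤ C * Real.exp (-κ * ‖x‖)) → Integrable (fun x => g x • x) := by
    intro g hgm hg0 hgb
    apply (hψint.const_mul C).mono' ((hgm.smul measurable_id).aestronglyMeasurable)
    filter_upwards with x
    change ‖g x • x‖ ≤ _
    rw [norm_smul, Real.norm_eq_abs, abs_of_nonneg (hg0 x)]
    calc g x * ‖x‖ ≤ (C * Real.exp (-κ * ‖x‖)) * ‖x‖ :=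
          mul_le_mul_of_nonneg_right (hgb x) (norm_nonneg x)
      _ = C * (Real.exp (-κ * ‖x‖) * ‖x‖) := by ring
  have hvecf : Integrable (fun x => f x • x) := hvec f hfm hf0 hboundf
  have hvecm : ∀ m, N ≤ m → Integrable (fun x => F m x • x) := fun m hm =>
    hvec (F m) (hFmeas m) (hF0 m) (hboundm m hm)
  -- convergence of the total masses
  have hIten : Tendsto (fun m => ∫ x, F m x) atTop (𝓝 (∫ x, f x)) := by
    have h0 : Tendsto (fun m => (∫ x, F m x) - ∫ x, f x) atTop (𝓝 0) := by
      apply squeeze_zero_norm (a := fun m => ∫ x, |F m x - f x|) ?_ hL1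
      intro m
      rw [Real.norm_eq_abs, ← integral_sub (hFint m) hfint]
      calc |∫ x, (F m x - f x)| = ‖∫ x, (F m x - f x)‖ := (Real.norm_eq_abs _).symm
        _ ≤ ∫ x, ‖F m x - f x‖ := norm_integral_le_integral_norm _
        _ = ∫ x, |F m x - f x| := by simp [Real.norm_eq_abs]
    have h1 := h0.add (tendsto_const_nhds (x := ∫ x, f x))
    simpa using h1
  -- convergence of the first moments
  have hvecten : Tendsto (fun m => ∫ x, F m x • x) atTop (𝓝 (∫ x, f x • x)) := by
    rw [← tendsto_sub_nhds_zero_iff]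
    rw [NormedAddCommGroup.tendsto_nhds_zero]
    intro ε hε
    have htail := tail_tendsto (hψint.const_mul (2*C))
    obtain ⟨R, hR⟩ :=
      (htail.eventually_lt_const (show (0:ℝ) < ε/2 by positivity)).exists
    have hmev : ∀ᶠ m in atTop, (∫ x, |F m x - f x|) < ε/(2*((R:ℝ)+1)) :=
      hL1.eventually_lt_const (by positivity)
    filter_upwards [hmev, eventually_ge_atTop N] with m ham hmN
    have habs : Integrable (fun x => |F m x - f x|) := ((hFint m).sub hfint).abs
    -- pointwise domination
    have hpt : ∀ x : Euc n, |F m x - f x| * ‖x‖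
        ≤ 2*C*(Real.exp (-κ*‖x‖)*‖x‖) := by
      intro x
      have h1 : |F m x - f x| ≤ F m x + f x := by
        calc |F m x - f x| ≤ |F m x| + |f x| := abs_sub _ _
          _ = F m x + f x := by rw [abs_of_nonneg (hF0 m x), abs_of_nonneg (hf0 x)]
      calc |F m x - f x| * ‖x‖ ≤ (F m x + f x) * ‖x‖ :=
            mul_le_mul_of_nonneg_right h1 (norm_nonneg x)
        _ ≤ (2*C*Real.exp (-κ*‖x‖)) * ‖x‖ := by
            apply mul_le_mul_of_nonneg_right ?_ (norm_nonneg x)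
            have hb1 := hboundm m hmN x
            have hb2 := hboundf x
            linarith
        _ = 2*C*(Real.exp (-κ*‖x‖)*‖x‖) := by ring
    have hdiffint : Integrable (fun x => |F m x - f x| * ‖x‖) := by
      apply (hψint.const_mul (2*C)).mono'
        ((((hFmeas m).sub hfm).abs.mul measurable_norm).aestronglyMeasurable)
      filter_upwards with x
      change ‖|F m x - f x| * ‖x‖‖ ≤ _
      rw [Real.norm_eq_abs, abs_of_nonneg (by positivity)]
      exact hpt x
    have hsplit : (∫ x, |F m x - f x| * ‖x‖)
        = (∫ x in Metric.ball (0:Euc n) R, |F m x - f x| * ‖x‖)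
          + ∫ x in (Metric.ball (0:Euc n) R)ᶜ, |F m x - f x| * ‖x‖ :=
      (integral_add_compl measurableSet_ball hdiffint).symm
    have hb1 : (∫ x in Metric.ball (0:Euc n) R, |F m x - f x| * ‖x‖)
        ≤ (R:ℝ) * ∫ x, |F m x - f x| := by
      calc (∫ x in Metric.ball (0:Euc n) R, |F m x - f x| * ‖x‖)
          ≤ ∫ x in Metric.ball (0:Euc n) R, (R:ℝ) * |F m x - f x| := by
            apply setIntegral_mono_on hdiffint.integrableOn
              (habs.const_mul _).integrableOn measurableSet_ball
            intro x hx
            rw [Metric.mem_ball, dist_zero_right] at hx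
            calc |F m x - f x| * ‖x‖ ≤ |F m x - f x| * R :=
                  mul_le_mul_of_nonneg_left hx.le (abs_nonneg _)
              _ = (R:ℝ) * |F m x - f x| := mul_comm _ _
        _ = (R:ℝ) * ∫ x in Metric.ball (0:Euc n) R, |F m x - f x| :=
            integral_const_mul _ _
        _ ≤ (R:ℝ) * ∫ x, |F m x - f x| := by
            apply mul_le_mul_of_nonneg_left ?_ (Nat.cast_nonneg R)
            exact setIntegral_le_integral habs
              (Eventually.of_forall fun x => abs_nonneg _)
    have hb2 : (∫ x in (Metric.ball (0:Euc n) R)ᶜ, |F m x - f x| * ‖x‖)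
        ≤ ∫ x in (Metric.ball (0:Euc n) R)ᶜ, 2*C*(Real.exp (-κ*‖x‖)*‖x‖) := by
      apply setIntegral_mono_on hdiffint.integrableOn
        ((hψint.const_mul (2*C)).integrableOn) measurableSet_ball.compl
      intro x _
      exact hpt x
    have hnorm : ‖(∫ x, F m x • x) - ∫ x, f x • x‖ ≤ ∫ x, |F m x - f x| * ‖x‖ := by
      rw [← integral_sub (hvecm m hmN) hvecf]
      calc ‖∫ x, (F m x • x - f x • x)‖ ≤ ∫ x, ‖F m x • x - f x • x‖ :=
            norm_integral_le_integral_norm _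
        _ = ∫ x, |F m x - f x| * ‖x‖ := by
            congr 1
            funext x
            rw [← sub_smul, norm_smul, Real.norm_eq_abs]
    have hfinal1 : (R:ℝ) * (∫ x, |F m x - f x|) < ε/2 := by
      have hRp : (0:ℝ) ≤ R := Nat.cast_nonneg R
      have hint0 : 0 ≤ ∫ x, |F m x - f x| :=
        integral_nonneg fun x => abs_nonneg _
      rcases Nat.eq_zero_or_pos R with h0 | h0
      · rw [h0]; push_cast; rw [zero_mul]; positivity
      · have hRpos : (0:ℝ) < R := by exact_mod_cast h0
        calc (R:ℝ) * (∫ x, |F m x - f x|) < (R:ℝ) * (ε/(2*((R:ℝ)+1))) :=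
              mul_lt_mul_of_pos_left ham hRpos
          _ = (R:ℝ) * ε/(2*((R:ℝ)+1)) := (mul_div_assoc _ _ _).symm
          _ ≤ ε/2 := by
              rw [div_le_div_iff₀ (by positivity) two_pos]
              nlinarith
    calc ‖(∫ x, F m x • x) - ∫ x, f x • x‖ ≤ ∫ x, |F m x - f x| * ‖x‖ := hnorm
      _ = _ + _ := hsplit
      _ < ε/2 + ε/2 := by
          apply add_lt_add_of_lt_of_le (lt_of_le_of_lt hb1 hfinal1)
            (le_trans hb2 (le_of_lt hR))
      _ = ε := by ring
  -- conclusion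
  have hfinal := Tendsto.smul (hIten.inv₀ hfpos.ne') hvecten
  simpa [centroidF] using hfinal
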